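/- arXiv:2007.09988 — 2 statements merged into one kernel-verified Lean document; each statement's English description precedes it below -/
import Mathlib

section
/- Fibrant cubespaces satisfy the gluing property: if X is a cubespace with k-completion for every k ≥ 0, then for every k and all c₁, c₂, c₃ ∈ C^k(X), if the concatenations [c₁,c₂] and [c₂,c₃] lie in C^{k+1}(X), then [c₁,c₃] ∈ C^{k+1}(X). -/
open Function Set

/-- The all-ones vertex `1⃗` of the discrete cube `{0,1}^k`. -/
def topVtx (k : ℕ) : Fin k → Bool := fun _ => true

/-- A family of cube sets on a space `X`: for each `k`, a set of `k`-configurations. -/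
structure CubeFamily (X : Type*) where
  cubes : ∀ k : ℕ, Set ((Fin k → Bool) → X)

/-- A morphism of discrete cubes: each coordinate function is constantly `0`,
constantly `1`, a coordinate `ω i`, or a negated coordinate `!ω i`. -/
def IsDiscreteCubeMorphism {k l : ℕ} (ρ : (Fin k → Bool) → (Fin l → Bool)) : Prop :=
  ∀ j : Fin l, (∀ ω, ρ ω j = false) ∨ (∀ ω, ρ ω j = true) ∨
    (∃ i : Fin k, ∀ ω, ρ ω j = ω i) ∨ (∃ i : Fin k, ∀ ω, ρ ω j = !(ω i))

/-- The cubespace axioms: cube sets are closed, `C^0(X) = X`, and cubes are stable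
under precomposition with morphisms of discrete cubes. -/
def CubeFamily.IsCubespace {X : Type*} [TopologicalSpace X] (S : CubeFamily X) : Prop :=
  (∀ k, IsClosed (S.cubes k)) ∧ S.cubes 0 = Set.univ ∧
    ∀ {k l : ℕ} (ρ : (Fin k → Bool) → (Fin l → Bool)), IsDiscreteCubeMorphism ρ →
      ∀ c ∈ S.cubes l, (fun ω => c (ρ ω)) ∈ S.cubes k

/-- A cubespace morphism: a continuous map sending cubes to cubes. -/
def IsMorphism {X Y : Type*} [TopologicalSpace X] [TopologicalSpace Y]
    (S : CubeFamily X) (T : CubeFamily Y) (f : X → Y) : Prop :=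
  Continuous f ∧ ∀ k, ∀ c ∈ S.cubes k, (fun ω => f (c ω)) ∈ T.cubes k

/-- `lam` is a `k`-corner: each lower face `{ω : ω i = 0}` restricts to a `(k-1)`-cube.
(The restriction of `lam` to the face `{ω : ω i = 0}` is a `(k-1)`-cube iff the
degenerate configuration `ω ↦ lam (update ω i false)` is a `k`-cube, by the
discrete-cube-morphism axiom; the value of `lam` at `topVtx k` is irrelevant here.) -/
def IsCubeCorner {X : Type*} (S : CubeFamily X) {k : ℕ} (lam : (Fin k → Bool) → X) : Prop :=
  ∀ i : Fin k, (fun ω => lam (Function.update ω i false)) ∈ S.cubes k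

/-- Relative `k`-completion for `f : X → Y`: every `k`-corner in `X` whose `f`-image
extends to a `k`-cube `c` of `Y` can be completed to a `k`-cube of `X` lying over `c`. -/
def HasCompletionAt {X Y : Type*} (S : CubeFamily X) (T : CubeFamily Y) (f : X → Y)
    (k : ℕ) : Prop :=
  ∀ (lam : (Fin k → Bool) → X) (c : (Fin k → Bool) → Y), IsCubeCorner S lam → c ∈ T.cubes k →
    (∀ ω, ω ≠ topVtx k → f (lam ω) = c ω) →
    ∃ c₀ ∈ S.cubes k, (∀ ω, ω ≠ topVtx k → c₀ ω = lam ω) ∧ (fun ω => f (c₀ ω)) = c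

/-- A fibration: a cubespace morphism with `k`-completion for all `k ≥ 0`. -/
def IsFibration {X Y : Type*} [TopologicalSpace X] [TopologicalSpace Y]
    (S : CubeFamily X) (T : CubeFamily Y) (f : X → Y) : Prop :=
  IsMorphism S T f ∧ ∀ k, HasCompletionAt S T f k

/-- Relative `k`-uniqueness: two `k`-cubes agreeing off the top vertex with equal
`f`-images are equal. -/
def HasUniquenessAt {X Y : Type*} (S : CubeFamily X) (T : CubeFamily Y) (f : X → Y)
    (k : ℕ) : Prop :=
  ∀ c ∈ S.cubes k, ∀ c' ∈ S.cubes k, (∀ ω, ω ≠ topVtx k → c ω = c' ω) →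
    (fun ω => f (c ω)) = (fun ω => f (c' ω)) → c = c'

/-- An `s`-fibration: a fibration with `(s+1)`-uniqueness. -/
def IsSFibration {X Y : Type*} [TopologicalSpace X] [TopologicalSpace Y]
    (S : CubeFamily X) (T : CubeFamily Y) (f : X → Y) (s : ℕ) : Prop :=
  IsFibration S T f ∧ HasUniquenessAt S T f (s + 1)

/-- Absolute fibrancy: every `k`-corner completes to a `k`-cube. -/
def IsFibrant {X : Type*} (S : CubeFamily X) : Prop :=
  ∀ (k : ℕ) (lam : (Fin k → Bool) → X), IsCubeCorner S lam →
    ∃ c₀ ∈ S.cubes k, ∀ ω, ω ≠ topVtx k → c₀ ω = lam ω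

/-- Absolute `k`-uniqueness. -/
def HasUnique {X : Type*} (S : CubeFamily X) (k : ℕ) : Prop :=
  ∀ c ∈ S.cubes k, ∀ c' ∈ S.cubes k, (∀ ω, ω ≠ topVtx k → c ω = c' ω) → c = c'

/-- Ergodicity: every pair of points is a `1`-cube. -/
def IsErgodic {X : Type*} (S : CubeFamily X) : Prop := S.cubes 1 = Set.univ

/-- Concatenation `[c₁, c₂]` of two `k`-configurations along the last coordinate. -/
def concatCube {X : Type*} {k : ℕ} (c₁ c₂ : (Fin k → Bool) → X) :
    (Fin (k + 1) → Bool) → X :=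
  fun ω => if ω (Fin.last k) = true then c₂ (fun i => ω i.castSucc)
           else c₁ (fun i => ω i.castSucc)

/-- The gluing property. -/
def IsGluing {X : Type*} (S : CubeFamily X) : Prop :=
  ∀ (k : ℕ) (c₁ c₂ c₃ : (Fin k → Bool) → X), c₁ ∈ S.cubes k → c₂ ∈ S.cubes k →
    c₃ ∈ S.cubes k → concatCube c₁ c₂ ∈ S.cubes (k + 1) →
    concatCube c₂ c₃ ∈ S.cubes (k + 1) → concatCube c₁ c₃ ∈ S.cubes (k + 1)

/-- The `s`-th canonical relation `x ∼ₛ x'`. -/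
def CanonRel {X : Type*} (S : CubeFamily X) (s : ℕ) (x x' : X) : Prop :=
  ∃ c ∈ S.cubes (s + 1), ∃ c' ∈ S.cubes (s + 1),
    (∀ ω, ω ≠ topVtx (s + 1) → c ω = c' ω) ∧ c (topVtx (s + 1)) = x ∧ c' (topVtx (s + 1)) = x'

/-- The `s`-th canonical relation relative to `f` : `x ∼_{f,s} x'`. -/
def RelCanonRel {X Y : Type*} (S : CubeFamily X) (f : X → Y) (s : ℕ) (x x' : X) : Prop :=
  CanonRel S s x x' ∧ f x = f x'

/-! Given `[c₁, c₂]` and `[c₂, c₃]`, place `c₂`, `c₃`, `c₁` at the corners `(0,0)`, `(1,0)`, `(0,1)`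
of a square of `k`-configurations. The resulting map is cubical on the two lower faces of the square,
a lower set of `{0,1}^(k+2)`, and fibrancy extends it to a `(k+2)`-cube vertex by vertex: each new
vertex is the top of a subcube whose other vertices are already filled, so one corner completion in
the dimension of that subcube supplies it. The antidiagonal `t ↦ (t, 1 - t)` of the square is then
the `(k+1)`-cube `[c₁, c₃]`. -/

def CubeFamily.IsClosedUnderMorphisms {X : Type*} (S : CubeFamily X) : Prop :=
  ∀ {k l : ℕ} (ρ : (Fin k → Bool) → (Fin l → Bool)), IsDiscreteCubeMorphism ρ →
    ∀ c ∈ S.cubes l, (fun ω => c (ρ ω)) ∈ S.cubes k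

def CubeFamily.CubicalOn {X : Type*} (S : CubeFamily X) {n : ℕ} (φ : (Fin n → Bool) → X)
    (A : Set (Fin n → Bool)) : Prop :=
  ∃ c ∈ S.cubes n, EqOn c φ A

namespace IsDiscreteCubeMorphism

theorem of_coord {k l : ℕ} (σ : Fin l → Fin k) :
    IsDiscreteCubeMorphism fun (ω : Fin k → Bool) j => ω (σ j) :=
  fun j => Or.inr <| Or.inr <| Or.inl ⟨σ j, fun _ => rfl⟩

theorem update_false {k : ℕ} (i : Fin k) :
    IsDiscreteCubeMorphism fun (ω : Fin k → Bool) => update ω i false := by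
  intro j
  by_cases hj : j = i
  · exact Or.inl fun ω => by simp [hj]
  · exact Or.inr <| Or.inr <| Or.inl ⟨j, fun ω => by simp [hj]⟩

theorem snoc {k l : ℕ} {ρ : (Fin k → Bool) → (Fin l → Bool)}
    (hρ : IsDiscreteCubeMorphism ρ) (i : Fin k) :
    IsDiscreteCubeMorphism fun ω => Fin.snoc (ρ ω) (ω i) := by
  intro j
  induction j using Fin.lastCases with
  | last => exact Or.inr <| Or.inr <| Or.inl ⟨i, fun ω => by simp⟩
  | cast j => simpa using hρ j

theorem snoc_not {k l : ℕ} {ρ : (Fin k → Bool) → (Fin l → Bool)}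
    (hρ : IsDiscreteCubeMorphism ρ) (i : Fin k) :
    IsDiscreteCubeMorphism fun ω => Fin.snoc (ρ ω) (!ω i) := by
  intro j
  induction j using Fin.lastCases with
  | last => exact Or.inr <| Or.inr <| Or.inr ⟨i, fun ω => by simp⟩
  | cast j => simpa using hρ j

end IsDiscreteCubeMorphism

theorem concatCube_snoc {X : Type*} {k : ℕ} (c₁ c₂ : (Fin k → Bool) → X) (θ : Fin k → Bool)
    (b : Bool) : concatCube c₁ c₂ (Fin.snoc θ b) = if b then c₂ θ else c₁ θ := by
  simp [concatCube]

namespace CubeFamily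

variable {X : Type*} {S : CubeFamily X}

theorem CubicalOn.mono {n : ℕ} {φ : (Fin n → Bool) → X} {A B : Set (Fin n → Bool)}
    (h : S.CubicalOn φ B) (hAB : A ⊆ B) : S.CubicalOn φ A :=
  let ⟨c, hc, hcφ⟩ := h; ⟨c, hc, hcφ.mono hAB⟩

theorem cubicalOn_Iio_of_forall_lt (hS : S.IsClosedUnderMorphisms) (hfib : IsFibrant S) {n : ℕ}
    {φ : (Fin n → Bool) → X} {v : Fin n → Bool} (h : ∀ u < v, S.CubicalOn φ (Iic u)) :
    S.CubicalOn φ (Iio v) := by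
  let e := (Fintype.equivFin {j // v j = true}).symm
  -- `α` identifies the cube `{0,1}^#{j | v j}` with the interval `[0, v]`.
  let α : (Fin (Fintype.card {j // v j = true}) → Bool) → (Fin n → Bool) :=
    fun θ j => if hj : v j = true then θ (e.symm ⟨j, hj⟩) else false
  have hα : IsDiscreteCubeMorphism α := by
    intro j
    by_cases hj : v j = true
    · exact Or.inr <| Or.inr <| Or.inl ⟨_, fun θ => dif_pos hj⟩
    · exact Or.inl fun θ => dif_neg hj
  have hα_restrict : ∀ ω, α (fun i => ω (e i)) = ω ⊓ v := by
    intro ω; funext j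
    by_cases hj : v j = true <;> simp [α, hj]
  have hα_top : α (topVtx _) = v := by
    funext j; by_cases hj : v j = true <;> simp [α, hj, topVtx]
  have hα_update : ∀ θ i, α (update θ i false) ≤ update v (e i) false := by
    intro θ i j
    by_cases hj : v j = true
    · by_cases hji : j = e i
      · subst hji; simp [α]
      · simp [update_of_ne hji, hj]
    · simp [α, hj]
  have hcorner : IsCubeCorner S (φ ∘ α) := by
    intro i
    obtain ⟨c, hc, hcφ⟩ := h (update v (e i) false) (update_lt_self_iff.2 (by simp [(e i).2]))
    convert hS _ (IsDiscreteCubeMorphism.update_false i) _ (hS α hα c hc) using 2 with θ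
    exact (hcφ (hα_update θ i)).symm
  obtain ⟨c₀, hc₀, hc₀φ⟩ := hfib _ _ hcorner
  refine ⟨fun ω => c₀ fun i => ω (e i), hS _ (IsDiscreteCubeMorphism.of_coord _) c₀ hc₀, ?_⟩
  intro w hw
  have hwv : w ⊓ v = w := inf_eq_left.2 hw.le
  have hne : (fun i => w (e i)) ≠ topVtx _ := by
    intro htop
    have := hα_restrict w
    rw [htop, hα_top, hwv] at this
    exact hw.ne this.symm
  simp only [hc₀φ _ hne, Function.comp_apply, hα_restrict, hwv]

theorem cubicalOn_of_isLowerSet (hS : S.IsClosedUnderMorphisms) (hfib : IsFibrant S) {n : ℕ}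
    {K : Set (Fin n → Bool)} (hK : IsLowerSet K) {φ : (Fin n → Bool) → X}
    (h : ∀ v ∈ K, S.CubicalOn φ (Iic v)) : S.CubicalOn φ K := by
  induction K using WellFoundedGT.induction generalizing φ with
  | _ K ih =>
    by_cases hK_top : topVtx n ∈ K
    · exact (h _ hK_top).mono fun w _ _ => le_top
    obtain ⟨v, hv⟩ := exists_minimal_of_wellFoundedLT (· ∉ K) ⟨_, hK_top⟩
    have hlt : ∀ w < v, w ∈ K := fun w hw => not_not.1 (hv.not_prop_of_lt hw)
    obtain ⟨c, hc, hcφ⟩ := cubicalOn_Iio_of_forall_lt hS hfib fun u hu => h u (hlt u hu)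
    have hK_insert : IsLowerSet (insert v K) := by
      intro a b hba ha
      rcases ha with rfl | ha
      · exact (eq_or_lt_of_le hba).elim Or.inl fun hb => Or.inr (hlt b hb)
      · exact Or.inr (hK hba ha)
    have h_insert : ∀ u ∈ insert v K, S.CubicalOn (update φ v (c v)) (Iic u) := by
      rintro u (rfl | hu)
      · refine ⟨c, hc, fun w hw => ?_⟩
        rcases (mem_Iic.1 hw).eq_or_lt with rfl | hw
        · simp
        · rw [update_of_ne hw.ne, hcφ hw]
      · obtain ⟨c', hc', hc'φ⟩ := h u hu
        refine ⟨c', hc', fun w hw => ?_⟩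
        rw [update_of_ne (ne_of_mem_of_not_mem (hK hw hu) hv.prop), hc'φ hw]
    obtain ⟨c', hc', hc'φ⟩ := ih (insert v K) (ssubset_insert hv.prop) hK_insert h_insert
    refine ⟨c', hc', fun w hw => ?_⟩
    rw [hc'φ (mem_insert_of_mem v hw), update_of_ne (ne_of_mem_of_not_mem hw hv.prop)]

theorem concatCube_swap_mem (hS : S.IsClosedUnderMorphisms) {k : ℕ}
    {c₁ c₂ : (Fin k → Bool) → X} (h : concatCube c₁ c₂ ∈ S.cubes (k + 1)) :
    concatCube c₂ c₁ ∈ S.cubes (k + 1) := by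
  convert hS _ ((IsDiscreteCubeMorphism.of_coord Fin.castSucc).snoc_not (Fin.last k)) _ h
    using 1
  funext ω
  induction ω using Fin.snocCases with
  | _ θ t => cases t <;> simp [concatCube_snoc]

theorem exists_concatCube_concatCube_mem (hS : S.IsClosedUnderMorphisms) (hfib : IsFibrant S)
    {k : ℕ} {c₀₀ c₀₁ c₁₀ : (Fin k → Bool) → X} (h₀ : concatCube c₀₀ c₀₁ ∈ S.cubes (k + 1))
    (h₁ : concatCube c₀₀ c₁₀ ∈ S.cubes (k + 1)) :
    ∃ c₁₁, concatCube (concatCube c₀₀ c₀₁) (concatCube c₁₀ c₁₁) ∈ S.cubes (k + 2) := by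
  set φ := concatCube (concatCube c₀₀ c₀₁) (concatCube c₁₀ c₀₀)
  have hφ_outer : S.CubicalOn φ {ω | ω (Fin.last (k + 1)) = false} := by
    refine ⟨_, hS _ (IsDiscreteCubeMorphism.of_coord Fin.castSucc) _ h₀, fun ω hω => ?_⟩
    induction ω using Fin.snocCases with
    | _ θ t => simp_all [φ, concatCube_snoc]
  have hφ_inner : S.CubicalOn φ {ω | ω (Fin.last k).castSucc = false} := by
    refine ⟨_, hS _ ((IsDiscreteCubeMorphism.of_coord
      fun j => j.castSucc.castSucc).snoc (Fin.last (k + 1))) _ h₁, fun ω hω => ?_⟩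
    induction ω using Fin.snocCases with
    | _ θ t =>
      induction θ using Fin.snocCases with
      | _ θ s => cases t <;> simp_all [φ, concatCube_snoc]
  set K : Set (Fin (k + 2) → Bool) :=
    {ω | ω (Fin.last k).castSucc = false ∨ ω (Fin.last (k + 1)) = false}
  have hK : IsLowerSet K := by
    rintro a b hba (ha | ha)
    · exact Or.inl (Bool.eq_false_of_le_false (ha ▸ hba _))
    · exact Or.inr (Bool.eq_false_of_le_false (ha ▸ hba _))
  obtain ⟨c, hc, hcφ⟩ := cubicalOn_of_isLowerSet hS hfib hK fun v hv => by
    rcases hv with hv | hv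
    · exact hφ_inner.mono fun w hw => Bool.eq_false_of_le_false (hv ▸ hw _)
    · exact hφ_outer.mono fun w hw => Bool.eq_false_of_le_false (hv ▸ hw _)
  refine ⟨fun θ => c (Fin.snoc (Fin.snoc θ true) true), ?_⟩
  convert hc using 1
  funext ω
  induction ω using Fin.snocCases with
  | _ θ t =>
    induction θ using Fin.snocCases with
    | _ θ s =>
      by_cases hω : Fin.snoc (Fin.snoc θ s) t ∈ K
      · rw [hcφ hω]
        cases s <;> cases t <;> simp_all [K, φ, concatCube_snoc]
      · obtain ⟨rfl, rfl⟩ : s = true ∧ t = true := by simpa [K] using hω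
        simp [concatCube_snoc]

theorem concatCube_antidiagonal_mem (hS : S.IsClosedUnderMorphisms) {k : ℕ}
    {c₀₀ c₀₁ c₁₀ c₁₁ : (Fin k → Bool) → X}
    (h : concatCube (concatCube c₀₀ c₀₁) (concatCube c₁₀ c₁₁) ∈ S.cubes (k + 2)) :
    concatCube c₁₀ c₀₁ ∈ S.cubes (k + 1) := by
  convert hS _ ((IsDiscreteCubeMorphism.of_coord id).snoc_not (Fin.last k)) _ h using 1
  funext ω
  induction ω using Fin.snocCases with
  | _ θ t => cases t <;> simp [concatCube_snoc]

end CubeFamily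

/-- fibrant cubespaces satisfy the gluing property. -/
theorem fibrant_is_gluing {X : Type*} [MetricSpace X]
    (S : CubeFamily X) (hS : S.IsCubespace) (hfib : IsFibrant S) :
    IsGluing S := by
  intro k c₁ c₂ c₃ _ _ _ h₁₂ h₂₃
  obtain ⟨c₄, hsquare⟩ := CubeFamily.exists_concatCube_concatCube_mem hS.2.2 hfib h₂₃
    (CubeFamily.concatCube_swap_mem hS.2.2 h₁₂)
  exact CubeFamily.concatCube_antidiagonal_mem hS.2.2 hsquare
end

section
/- Vertical independence: let φ : X → Y, g : X → Z, h : Y → Z be s-fibrations between compact ergodic gluing cubespaces with g = h ∘ φ, where φ is vertical. Then for any u ∈ Aut₁(g) and any x, x' ∈ X with φ(x) = φ(x'), one has φ(u(x)) = φ(u(x')). -/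
open Function Set

/-- `F ⊆ {0,1}^n` is a face of codimension `k`: obtained by fixing the values of `k`
coordinates. -/
def IsFaceOfCodim {n : ℕ} (F : Set (Fin n → Bool)) (k : ℕ) : Prop :=
  ∃ (I : Finset (Fin n)) (b : Fin n → Bool), I.card = k ∧ F = {ω | ∀ i ∈ I, ω i = b i}

open Classical in
/-- Modify the configuration `c` by applying `φ` on the face `F`. -/
noncomputable def faceModify {X : Type*} {n : ℕ} (F : Set (Fin n → Bool)) (φ : X → X)
    (c : (Fin n → Bool) → X) : (Fin n → Bool) → X :=
  fun ω => if ω ∈ F then φ (c ω) else c ω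

/-- `φ` is a `k`-translation of the cubespace `S`: a cubespace automorphism such that
modifying any `n`-cube (`n ≥ k`) by `φ` along any codimension-`k` face yields a cube. -/
def IsTranslationOf {X : Type*} (S : CubeFamily X) (φ : X → X) (k : ℕ) : Prop :=
  (∀ (n : ℕ) (c : (Fin n → Bool) → X), c ∈ S.cubes n ↔ (fun ω => φ (c ω)) ∈ S.cubes n) ∧
  ∀ (n : ℕ), k ≤ n → ∀ F : Set (Fin n → Bool), IsFaceOfCodim F k →
    ∀ c ∈ S.cubes n, faceModify F φ c ∈ S.cubes n

/-- The subcubespace on a subset `A ⊆ X`: cubes of `X` taking values in `A`. -/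
def subFamily {X : Type*} (S : CubeFamily X) (A : Set X) : CubeFamily X :=
  ⟨fun k => {c | c ∈ S.cubes k ∧ ∀ ω, c ω ∈ A}⟩

/-- `u` belongs to the `k`-th translation group `Aut_k(g)` of a map `g : X → Z`: it is
a homeomorphism of `X` fixing the fibers of `g` and restricting to a `k`-translation of
each subcubespace `g⁻¹(z)`. -/
def MemAut {X Z : Type*} [TopologicalSpace X] (S : CubeFamily X) (g : X → Z)
    (u : X → X) (k : ℕ) : Prop :=
  IsHomeomorph u ∧ (∀ x, g (u x) = g x) ∧
    ∀ z : Z, IsTranslationOf (subFamily S (g ⁻¹' {z})) u k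

/-!
Verticality turns `φ x = φ x'` into `x ∼_{g,s-1} x'`, and in a gluing cubespace this makes the
corner `⌞(x, x')` (the constant `s`-cube at `x` with its top vertex replaced by `x'`) a cube of the
fibre `g⁻¹(g x)`. Indeed, if `[c₀, c₁]` and `[c₀, c₁']` are cubes with `c₁, c₁'` differing only at
the top vertex, gluing the reflection `[c₁, c₀]` to `[c₀, c₁']` gives the cube `[c₁, c₁']`; this
collapses one coordinate, and collapsing every coordinate leaves the corner.
As `u` is a `1`-translation of that fibre, `[⌞(x, x'), u ∘ ⌞(x, x')]` and `[x, u x]` are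
`(s+1)`-cubes. Their `φ`-images differ only at the top vertex and have the same `h`-image, so
`(s+1)`-uniqueness of `h` gives `φ (u x') = φ (u x)`.
-/

section Cubes

variable {X : Type*} {k n : ℕ}

theorem concatCube_apply (a b : (Fin n → Bool) → X) (ω : Fin (n + 1) → Bool) :
    concatCube a b ω = if ω (Fin.last n) = true then b (Fin.init ω) else a (Fin.init ω) :=
  rfl

theorem eq_topVtx_succ_iff {ω : Fin (n + 1) → Bool} :
    ω = topVtx (n + 1) ↔ Fin.init ω = topVtx n ∧ ω (Fin.last n) = true := by
  refine ⟨by rintro rfl; exact ⟨rfl, rfl⟩, fun ⟨hinit, hlast⟩ => funext fun i => ?_⟩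
  induction i using Fin.lastCases with
  | last => exact hlast
  | cast i => exact congrFun hinit i

theorem concatCube_update_topVtx (a b : (Fin n → Bool) → X) (y : X) :
    concatCube a (update b (topVtx n) y) = update (concatCube a b) (topVtx (n + 1)) y := by
  funext ω
  by_cases hlast : ω (Fin.last n) = true
  · simp [concatCube_apply, update_apply, eq_topVtx_succ_iff, hlast]
  · simp [concatCube_apply, eq_topVtx_succ_iff, hlast]

theorem comp_concatCube {Y : Type*} (f : X → Y) (a b : (Fin n → Bool) → X) :
    f ∘ concatCube a b = concatCube (f ∘ a) (f ∘ b) := by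
  funext ω
  simp only [comp_apply, concatCube]
  split_ifs <;> rfl

theorem concatCube_self (c : (Fin n → Bool) → X) :
    concatCube c c = fun ω => c (Fin.init ω) := by
  funext ω
  simp only [concatCube]
  split_ifs <;> rfl

theorem concatCube_faces (v : (Fin (n + 1) → Bool) → X) :
    concatCube (fun η => v (Fin.snoc η false)) (fun η => v (Fin.snoc η true)) = v := by
  funext ω
  conv_rhs => rw [← Fin.snoc_init_self ω]
  by_cases h : ω (Fin.last n) = true <;> simp [concatCube_apply, h]

theorem isDiscreteCubeMorphism_init :
    IsDiscreteCubeMorphism (fun ω : Fin (n + 1) → Bool => Fin.init ω) :=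
  fun i => Or.inr (Or.inr (Or.inl ⟨i.castSucc, fun _ => rfl⟩))

theorem isDiscreteCubeMorphism_snoc (b : Bool) :
    IsDiscreteCubeMorphism (fun η : Fin n → Bool => (Fin.snoc η b : Fin (n + 1) → Bool)) := by
  intro j
  induction j using Fin.lastCases with
  | last => cases b <;> simp
  | cast i => exact Or.inr (Or.inr (Or.inl ⟨i, fun _ => by simp⟩))

theorem isDiscreteCubeMorphism_snoc_not_last :
    IsDiscreteCubeMorphism (fun ω : Fin (n + 1) → Bool =>
      (Fin.snoc (Fin.init ω) (!ω (Fin.last n)) : Fin (n + 1) → Bool)) := by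
  intro j
  induction j using Fin.lastCases with
  | last => exact Or.inr (Or.inr (Or.inr ⟨Fin.last n, fun _ => by simp⟩))
  | cast i => exact Or.inr (Or.inr (Or.inl ⟨i.castSucc, fun _ => by simp [Fin.init]⟩))

theorem isDiscreteCubeMorphism_update (i : Fin k) (b : Bool) :
    IsDiscreteCubeMorphism (fun ω : Fin k → Bool => update ω i b) := by
  intro j
  by_cases hj : j = i
  · subst hj; cases b <;> simp
  · exact Or.inr (Or.inr (Or.inl ⟨j, fun _ => update_of_ne hj _ _⟩))

theorem isDiscreteCubeMorphism_comp_perm (e : Equiv.Perm (Fin k)) :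
    IsDiscreteCubeMorphism (fun ω : Fin k → Bool => ω ∘ e) :=
  fun j => Or.inr (Or.inr (Or.inl ⟨e j, fun _ => rfl⟩))

theorem update_topVtx_comp_perm (v : (Fin k → Bool) → X) (y : X) (e : Equiv.Perm (Fin k)) :
    update v (topVtx k) y ∘ (fun ω => ω ∘ e) = update (v ∘ fun ω => ω ∘ e) (topVtx k) y :=
  update_comp_eq_of_injective v e.surjective.injective_comp_right (topVtx k) y

end Cubes

section Cubespace

variable {X : Type*} [TopologicalSpace X] {S : CubeFamily X} {k n : ℕ}

theorem CubeFamily.IsCubespace.comp_mem (hS : S.IsCubespace) {l : ℕ}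
    {ρ : (Fin k → Bool) → (Fin l → Bool)} (hρ : IsDiscreteCubeMorphism ρ)
    {c : (Fin l → Bool) → X} (hc : c ∈ S.cubes l) : c ∘ ρ ∈ S.cubes k :=
  hS.2.2 ρ hρ c hc

theorem CubeFamily.IsCubespace.const_mem (hS : S.IsCubespace) (x : X) (k : ℕ) :
    (fun _ => x : (Fin k → Bool) → X) ∈ S.cubes k :=
  hS.comp_mem (ρ := fun _ => Fin.elim0) (fun j => j.elim0) (c := fun _ => x)
    (by rw [hS.2.1]; trivial)

theorem CubeFamily.IsCubespace.mem_of_concatCube_mem_left (hS : S.IsCubespace)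
    {a b : (Fin n → Bool) → X} (h : concatCube a b ∈ S.cubes (n + 1)) : a ∈ S.cubes n := by
  simpa [comp_def, concatCube_apply] using hS.comp_mem (isDiscreteCubeMorphism_snoc false) h

theorem CubeFamily.IsCubespace.mem_of_concatCube_mem_right (hS : S.IsCubespace)
    {a b : (Fin n → Bool) → X} (h : concatCube a b ∈ S.cubes (n + 1)) : b ∈ S.cubes n := by
  simpa [comp_def, concatCube_apply] using hS.comp_mem (isDiscreteCubeMorphism_snoc true) h

theorem CubeFamily.IsCubespace.concatCube_swap_mem (hS : S.IsCubespace)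
    {a b : (Fin n → Bool) → X} (h : concatCube a b ∈ S.cubes (n + 1)) :
    concatCube b a ∈ S.cubes (n + 1) := by
  convert hS.comp_mem isDiscreteCubeMorphism_snoc_not_last h using 1
  funext ω
  by_cases hlast : ω (Fin.last n) = true <;> simp [concatCube_apply, hlast]

theorem CubeFamily.IsCubespace.concatCube_self_mem (hS : S.IsCubespace)
    {c : (Fin n → Bool) → X} (hc : c ∈ S.cubes n) : concatCube c c ∈ S.cubes (n + 1) := by
  rw [concatCube_self]
  exact hS.comp_mem isDiscreteCubeMorphism_init hc

theorem canonRel_refl (hS : S.IsCubespace) (s : ℕ) (x : X) : CanonRel S s x x :=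
  ⟨_, hS.const_mem x _, _, hS.const_mem x _, fun _ _ => rfl, rfl, rfl⟩

end Cubespace

section Gluing

variable {X : Type*} [TopologicalSpace X] {S : CubeFamily X} {n : ℕ}
  (hS : S.IsCubespace) (hgl : IsGluing S)
include hS hgl

theorem concatCube_update_topVtx_mem {a b : (Fin n → Bool) → X} {y : X}
    (hab : concatCube a b ∈ S.cubes (n + 1))
    (haby : concatCube a (update b (topVtx n) y) ∈ S.cubes (n + 1)) :
    concatCube b (update b (topVtx n) y) ∈ S.cubes (n + 1) :=
  hgl n b a _ (hS.mem_of_concatCube_mem_right hab) (hS.mem_of_concatCube_mem_left hab)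
    (hS.mem_of_concatCube_mem_right haby) (hS.concatCube_swap_mem hab) haby

theorem update_topVtx_comp_update_last_mem {v : (Fin (n + 1) → Bool) → X} {y : X}
    (hv : v ∈ S.cubes (n + 1)) (hvy : update v (topVtx (n + 1)) y ∈ S.cubes (n + 1)) :
    update (fun ω => v (update ω (Fin.last n) true)) (topVtx (n + 1)) y ∈ S.cubes (n + 1) := by
  rw [← concatCube_faces v] at hv hvy
  rw [← concatCube_update_topVtx] at hvy
  have hglued := concatCube_update_topVtx_mem hS hgl hv hvy
  rw [concatCube_update_topVtx, concatCube_self] at hglued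
  convert hglued using 3 with ω
  rw [← Fin.snoc_init_self ω, Fin.update_snoc_last, Fin.init_snoc]

theorem update_topVtx_comp_update_mem (i : Fin (n + 1)) {v : (Fin (n + 1) → Bool) → X} {y : X}
    (hv : v ∈ S.cubes (n + 1)) (hvy : update v (topVtx (n + 1)) y ∈ S.cubes (n + 1)) :
    update (fun ω => v (update ω i true)) (topVtx (n + 1)) y ∈ S.cubes (n + 1) := by
  set e := Equiv.swap i (Fin.last n)
  have hperm := isDiscreteCubeMorphism_comp_perm e
  have hlast := update_topVtx_comp_update_last_mem hS hgl (hS.comp_mem hperm hv)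
    (by rw [← update_topVtx_comp_perm]; exact hS.comp_mem hperm hvy)
  have hback := hS.comp_mem hperm hlast
  rw [update_topVtx_comp_perm] at hback
  convert hback using 3 with ω
  change v (update ω i true) = v (update (ω ∘ e) (Fin.last n) true ∘ e)
  rw [update_comp_equiv, comp_assoc, ← Equiv.Perm.coe_mul, Equiv.swap_mul_self]
  simp [e]

theorem update_topVtx_const_mem {v : (Fin (n + 1) → Bool) → X} {y : X}
    (hv : v ∈ S.cubes (n + 1)) (hvy : update v (topVtx (n + 1)) y ∈ S.cubes (n + 1)) :
    update (fun _ => v (topVtx (n + 1))) (topVtx (n + 1)) y ∈ S.cubes (n + 1) := by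
  suffices key : ∀ I : Finset (Fin (n + 1)),
      let w := fun ω => v fun i => if i ∈ I then true else ω i
      w ∈ S.cubes (n + 1) ∧ update w (topVtx (n + 1)) y ∈ S.cubes (n + 1) by
    have hall := (key Finset.univ).2
    simp only [Finset.mem_univ, if_true] at hall
    exact hall
  intro I
  induction I using Finset.induction_on with
  | empty => simpa using ⟨hv, hvy⟩
  | insert a I _ ih =>
    have hinsert : (fun ω => v fun i => if i ∈ insert a I then true else ω i) =
        fun ω => (fun ω => v fun i => if i ∈ I then true else ω i) (update ω a true) := by
      funext ω
      congr 1
      funext i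
      by_cases hi : i = a <;> simp [hi]
    simp only [hinsert]
    exact ⟨hS.comp_mem (isDiscreteCubeMorphism_update a true) ih.1,
      update_topVtx_comp_update_mem hS hgl a ih.1 ih.2⟩

theorem CanonRel.update_const_mem {x x' : X} (hxx' : CanonRel S n x x') :
    update (fun _ => x) (topVtx (n + 1)) x' ∈ S.cubes (n + 1) := by
  obtain ⟨c, hc, c', hc', hagree, rfl, rfl⟩ := hxx'
  have hc'_eq : c' = update c (topVtx (n + 1)) (c' (topVtx (n + 1))) := by
    funext ω
    by_cases hω : ω = topVtx (n + 1)
    · simp [hω]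
    · simp [hω, hagree ω hω]
  exact update_topVtx_const_mem hS hgl hc (hc'_eq ▸ hc')

end Gluing

section Translation

variable {X : Type*} {n : ℕ}

theorem isFaceOfCodim_last_eq_true :
    IsFaceOfCodim {ω : Fin (n + 1) → Bool | ω (Fin.last n) = true} 1 :=
  ⟨{Fin.last n}, fun _ => true, Finset.card_singleton _, by ext ω; simp⟩

theorem faceModify_concatCube (u : X → X) (a b : (Fin n → Bool) → X) :
    faceModify {ω | ω (Fin.last n) = true} u (concatCube a b) = concatCube a (u ∘ b) := by
  funext ω
  by_cases hlast : ω (Fin.last n) = true <;> simp [faceModify, concatCube_apply, hlast]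

theorem concatCube_comp_mem_of_isTranslationOf [TopologicalSpace X] {S : CubeFamily X}
    (hS : S.IsCubespace) {A : Set X} {u : X → X} (hu : IsTranslationOf (subFamily S A) u 1)
    {c : (Fin n → Bool) → X} (hc : c ∈ S.cubes n) (hcA : ∀ ω, c ω ∈ A) :
    concatCube c (u ∘ c) ∈ S.cubes (n + 1) := by
  have hcc : concatCube c c ∈ (subFamily S A).cubes (n + 1) :=
    ⟨hS.concatCube_self_mem hc, fun ω => by rw [concatCube_apply]; split_ifs <;> exact hcA _⟩
  have hmod := hu.2 (n + 1) (by omega) _ isFaceOfCodim_last_eq_true _ hcc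
  rw [faceModify_concatCube] at hmod
  exact hmod.1

end Translation

theorem HasUniquenessAt.eq_of_update_topVtx_mem {Y Z : Type*} {T : CubeFamily Y}
    {U : CubeFamily Z} {h : Y → Z} {k : ℕ} (hh : HasUniquenessAt T U h k)
    {c : (Fin k → Bool) → Y} (hc : c ∈ T.cubes k) {y : Y}
    (hcy : update c (topVtx k) y ∈ T.cubes k) (hy : h y = h (c (topVtx k))) :
    y = c (topVtx k) := by
  have heq := hh _ hcy _ hc (fun ω hω => update_of_ne hω _ _) <| funext fun ω => by
    by_cases hω : ω = topVtx k
    · simp [hω, hy]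
    · simp [hω]
  simpa using congrFun heq (topVtx k)

theorem vertical_independence_general {X Y Z : Type*}
    [MetricSpace X] [MetricSpace Y] [MetricSpace Z]
    (S : CubeFamily X) (T : CubeFamily Y) (U : CubeFamily Z)
    (hS : S.IsCubespace) (hT : T.IsCubespace)
    (hgS : IsGluing S)
    (s : ℕ) (hs : 1 ≤ s)
    (φ : X → Y) (g : X → Z) (h : Y → Z)
    (hφ : IsSFibration S T φ s) (hh : IsSFibration T U h s)
    (hcomp : ∀ x, g x = h (φ x))
    (hvert : ∀ x x' : X, RelCanonRel T h (s - 1) (φ x) (φ x') →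
      RelCanonRel S g (s - 1) x x')
    (u : X → X) (hu : MemAut S g u 1) :
    ∀ x x' : X, φ x = φ x' → φ (u x) = φ (u x') := by
  intro x x' hxx'
  obtain ⟨n, rfl⟩ : ∃ n, s = n + 1 := ⟨s - 1, by omega⟩
  rw [Nat.add_sub_cancel] at hvert
  obtain ⟨hcan, hgxx'⟩ := hvert x x' ⟨hxx' ▸ canonRel_refl hT n (φ x), congrArg h hxx'⟩
  set d := update (fun _ => x) (topVtx (n + 1)) x'
  have hd : d ∈ S.cubes (n + 1) := hcan.update_const_mem hS hgS
  have hd_fiber : ∀ ω, d ω ∈ g ⁻¹' {g x} := fun ω => by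
    by_cases hω : ω = topVtx (n + 1) <;> simp [d, hω, hgxx']
  have hφd : φ ∘ d = φ ∘ fun _ => x := funext fun ω => by
    by_cases hω : ω = topVtx (n + 1) <;> simp [d, hω, hxx']
  have hK₀ : φ ∘ concatCube (fun _ => x) (u ∘ fun _ => x) ∈ T.cubes (n + 2) :=
    hφ.1.1.2 _ _ <| concatCube_comp_mem_of_isTranslationOf hS (hu.2.2 (g x))
      (hS.const_mem x (n + 1)) fun _ => rfl
  have hK : φ ∘ concatCube d (u ∘ d) ∈ T.cubes (n + 2) :=
    hφ.1.1.2 _ _ <| concatCube_comp_mem_of_isTranslationOf hS (hu.2.2 (g x)) hd hd_fiber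
  rw [comp_concatCube, hφd, comp_update, comp_update, concatCube_update_topVtx,
    ← comp_concatCube] at hK
  have htop := hh.2.eq_of_update_topVtx_mem hK₀ hK
    (by simp [concatCube_apply, topVtx, ← hcomp, hu.2.1, hgxx'])
  simpa [concatCube_apply, topVtx] using htop.symm

/-- vertical independence: let `φ : X → Y`, `g : X → Z`, `h : Y → Z` be
`s`-fibrations between compact ergodic gluing cubespaces with `g = h ∘ φ` and `φ`
vertical.  Then for any `u ∈ Aut₁(g)` and any `x, x'` with `φ(x) = φ(x')`, one has
`φ(u(x)) = φ(u(x'))`. -/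
theorem vertical_independence {X Y Z : Type*}
    [MetricSpace X] [MetricSpace Y] [MetricSpace Z]
    [CompactSpace X] [CompactSpace Y] [CompactSpace Z]
    (S : CubeFamily X) (T : CubeFamily Y) (U : CubeFamily Z)
    (hS : S.IsCubespace) (hT : T.IsCubespace) (hU : U.IsCubespace)
    (heS : IsErgodic S) (heT : IsErgodic T) (heU : IsErgodic U)
    (hgS : IsGluing S) (hgT : IsGluing T) (hgU : IsGluing U)
    (s : ℕ) (hs : 1 ≤ s)
    (φ : X → Y) (g : X → Z) (h : Y → Z)
    (hφ : IsSFibration S T φ s) (hg : IsSFibration S U g s) (hh : IsSFibration T U h s)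
    (hcomp : ∀ x, g x = h (φ x))
    (hvert : ∀ x x' : X, RelCanonRel T h (s - 1) (φ x) (φ x') →
      RelCanonRel S g (s - 1) x x')
    (u : X → X) (hu : MemAut S g u 1) :
    ∀ x x' : X, φ x = φ x' → φ (u x) = φ (u x') :=
  vertical_independence_general S T U hS hT hgS s hs φ g h hφ hh hcomp hvert u hu
end
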